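/- arXiv:1609.02420 — 2 statements merged into one kernel-verified Lean document; each statement's English description precedes it below -/
import Mathlib

section
/- Let g = 2r with r ≥ 2, and let G_1 = π_g / N(ℬ^g_1). Then the image of c_r in G_1 is trivial, and for every 1 ≤ k ≤ r the image of the word b_k c_{g−k}^{-1} b_{g+1−k} c_{g+1−k} in G_1 is trivial. -/
/-!
Write `≡` for equality in `G_1`. The relator `B^g_1` together with `B^g_{0,1} ≡ 1` and `c_g ≡ 1`
gives `a_1 a_g ≡ 1`. Inductively, if `a_k a_{g+1-k} ≡ 1` then `B^g_{2k}` forces the middle part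
`b_{k+1} ⋯ b_{g-k} c_{g-k}` to vanish, and removing it from `B^g_{2k+1}` leaves
`a_{k+1} a_{g-k} ≡ 1`. For `k = r` the middle part is just `c_r`. For general `k`, expanding
`c_{g+1-k}` by one step collapses `B^g_{2k-1}` to a conjugate of the word
`b_k c_{g-k}⁻¹ b_{g+1-k} c_{g+1-k}`.
-/

namespace Paper

/-- The free group `F_g` on the `2g` generators `a_1, b_1, …, a_g, b_g`
(the pair `(i, false)` is `a_{i+1}`, the pair `(i, true)` is `b_{i+1}`). -/
abbrev F (g : ℕ) := FreeGroup (Fin g × Bool)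

/-- The generator `a_i` of `F_g`, for `1 ≤ i ≤ g`; by convention `a_i = 1` for out-of-range
indices (in particular `a_{g+1} = 1`). -/
def a (g i : ℕ) : F g :=
  if h : 1 ≤ i ∧ i ≤ g then FreeGroup.of (⟨i - 1, by omega⟩, false) else 1

/-- The generator `b_i` of `F_g`, for `1 ≤ i ≤ g`. -/
def b (g i : ℕ) : F g :=
  if h : 1 ≤ i ∧ i ≤ g then FreeGroup.of (⟨i - 1, by omega⟩, true) else 1

/-- The word `c_i = b_i⁻¹ ⋯ b_2⁻¹ b_1⁻¹ (a_1 b_1 a_1⁻¹)(a_2 b_2 a_2⁻¹) ⋯ (a_i b_i a_i⁻¹)`,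
with `c_0 = 1`. -/
def c (g i : ℕ) : F g :=
  (((List.range i).reverse.map fun j => (b g (j + 1))⁻¹).prod) *
    (((List.range i).map fun j => a g (j + 1) * b g (j + 1) * (a g (j + 1))⁻¹).prod)

/-- The product `b_i b_{i+1} ⋯ b_j`. -/
def prodb (g i j : ℕ) : F g := ((List.range (j + 1 - i)).map fun l => b g (i + l)).prod

/-- `B^h_{0,1} = b_1 b_2 ⋯ b_h`. -/
def B01 (g h : ℕ) : F g := prodb g 1 h

/-- `B^h_{0,2} = b_1 b_2 ⋯ b_h · c_h a_{h+1}`. -/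
def B02 (g h : ℕ) : F g := prodb g 1 h * c g h * a g (h + 1)

/-- `B^h_{0,s}` for `s = 1, 2`. -/
def B0 (g s h : ℕ) : F g := if s = 1 then B01 g h else B02 g h

/-- `B^h_{2k-1} = a_k · b_k b_{k+1} ⋯ b_{h+1-k} · c_{h+1-k} a_{h+1-k}`. -/
def Bodd (g h k : ℕ) : F g :=
  a g k * prodb g k (h + 1 - k) * c g (h + 1 - k) * a g (h + 1 - k)

/-- `B^h_{2k} = a_k · b_{k+1} b_{k+2} ⋯ b_{h-k} · c_{h-k} a_{h+1-k}`. -/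
def Beven (g h k : ℕ) : F g :=
  a g k * prodb g (k + 1) (h - k) * c g (h - k) * a g (h + 1 - k)

/-- The set of words `ℬ^h_s`: it consists of `B^h_{0,s}, B^h_1, …, B^h_h` (the odd-indexed
`B^h_{2k-1}` for `2k - 1 ≤ h` and the even-indexed `B^h_{2k}` for `2k ≤ h`), together with
`a_{r+1}` and `c_r a_{r+1}` when `h = 2r + 1` is odd. -/
def Bset (g s h : ℕ) : Set (F g) :=
  {B0 g s h}
    ∪ {w | ∃ k, 1 ≤ k ∧ 2 * k - 1 ≤ h ∧ w = Bodd g h k}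
    ∪ {w | ∃ k, 1 ≤ k ∧ 2 * k ≤ h ∧ w = Beven g h k}
    ∪ (if h % 2 = 1 then {a g (h / 2 + 1), c g (h / 2) * a g (h / 2 + 1)} else (∅ : Set (F g)))

/-- The genus-`g` surface group `π_g`, presented with generators `a_1, b_1, …, a_g, b_g`
and the single relator `c_g`. -/
abbrev pi (g : ℕ) := PresentedGroup ({c g g} : Set (F g))

/-- The natural projection `F_g → π_g`. -/
abbrev toPi (g : ℕ) : F g →* pi g := PresentedGroup.mk _

/-- The quotient of `π_g` by the normal closure of the images of a set `S` of words. -/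
abbrev quotBy (g : ℕ) (S : Set (F g)) :=
  pi g ⧸ Subgroup.normalClosure (toPi g '' S)

/-- The projection `π_g → π_g / N(S)`. -/
abbrev projBy (g : ℕ) (S : Set (F g)) : pi g →* quotBy g S :=
  QuotientGroup.mk' _

lemma c_zero (g : ℕ) : c g 0 = 1 := by
  simp [c]

lemma c_succ (g i : ℕ) :
    c g (i + 1) = (b g (i + 1))⁻¹ * c g i * (a g (i + 1) * b g (i + 1) * (a g (i + 1))⁻¹) := by
  simp only [c, List.range_succ, List.reverse_append, List.map_append, List.prod_append]
  simp [mul_assoc]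

lemma prodb_succ_self (g i : ℕ) : prodb g (i + 1) i = 1 := by
  rw [prodb, Nat.sub_self, List.range_zero, List.map_nil, List.prod_nil]

lemma prodb_succ_right (g : ℕ) {i j : ℕ} (h : i ≤ j + 1) :
    prodb g i (j + 1) = prodb g i j * b g (j + 1) := by
  rw [prodb, show j + 1 + 1 - i = (j + 1 - i) + 1 by omega, List.range_succ, List.map_append,
    List.prod_append, List.map_singleton, List.prod_singleton, prodb]
  congr 2
  omega

lemma prodb_eq_b_mul_prodb_succ (g : ℕ) {i j : ℕ} (h : i ≤ j) :
    prodb g i j = b g i * prodb g (i + 1) j := by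
  rw [prodb, show j + 1 - i = (j - i) + 1 by omega, List.range_succ_eq_map, List.map_cons,
    List.prod_cons, List.map_map, prodb, show j + 1 - (i + 1) = j - i by omega]
  congr 2
  exact List.map_congr_left fun l _ => congrArg (b g) (by omega)

lemma B0_mem_Bset (g s h : ℕ) : B0 g s h ∈ Bset g s h :=
  Or.inl (Or.inl (Or.inl rfl))

lemma Bodd_mem_Bset (g s : ℕ) {h k : ℕ} (hk : 1 ≤ k) (hkh : 2 * k - 1 ≤ h) :
    Bodd g h k ∈ Bset g s h :=
  Or.inl (Or.inl (Or.inr ⟨k, hk, hkh, rfl⟩))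

lemma Beven_mem_Bset (g s : ℕ) {h k : ℕ} (hk : 1 ≤ k) (hkh : 2 * k ≤ h) :
    Beven g h k ∈ Bset g s h :=
  Or.inl (Or.inr ⟨k, hk, hkh, rfl⟩)

lemma mul_mul_mul_eq_one_iff {G : Type*} [Group G] {x y u v : G} (hxy : x * y = 1) :
    x * u * v * y = 1 ↔ u * v = 1 := by
  rw [eq_inv_of_mul_eq_one_right hxy, mul_assoc x u, conj_eq_one_iff]

section Relations

variable {G : Type*} [Group G] {g : ℕ} (φ : F g →* G)

lemma map_Bodd_eq_one (hB : ∀ w ∈ Bset g 1 g, φ w = 1) {k : ℕ} (hk : 1 ≤ k)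
    (hkg : 2 * k ≤ g + 1) :
    φ (a g k) * φ (prodb g k (g + 1 - k)) * φ (c g (g + 1 - k)) * φ (a g (g + 1 - k)) = 1 := by
  simpa only [Bodd, map_mul] using hB _ (Bodd_mem_Bset g 1 hk (by omega))

lemma map_Beven_eq_one (hB : ∀ w ∈ Bset g 1 g, φ w = 1) {k : ℕ} (hk : 1 ≤ k) (hkg : 2 * k ≤ g) :
    φ (a g k) * φ (prodb g (k + 1) (g - k)) * φ (c g (g - k)) * φ (a g (g + 1 - k)) = 1 := by
  simpa only [Beven, map_mul] using hB _ (Beven_mem_Bset g 1 hk hkg)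

lemma map_a_mul_map_a_eq_one (hB : ∀ w ∈ Bset g 1 g, φ w = 1) (hc : φ (c g g) = 1)
    {k : ℕ} (hk : 1 ≤ k) (hkg : 2 * k ≤ g + 1) :
    φ (a g k) * φ (a g (g + 1 - k)) = 1 := by
  induction k, hk using Nat.le_induction with
  | base =>
    have hB01 : φ (prodb g 1 g) = 1 := hB _ (B0_mem_Bset g 1 g)
    simpa [hB01, hc] using map_Bodd_eq_one φ hB le_rfl hkg
  | succ n hn ih =>
    have hmiddle : φ (prodb g (n + 1) (g - n)) * φ (c g (g - n)) = 1 :=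
      (mul_mul_mul_eq_one_iff (ih (by omega))).mp (map_Beven_eq_one φ hB hn (by omega))
    have hodd := map_Bodd_eq_one φ hB (k := n + 1) (by omega) hkg
    rw [Nat.add_sub_add_right, mul_assoc (φ (a g (n + 1))), hmiddle, mul_one] at hodd
    rwa [Nat.add_sub_add_right]

lemma map_prodb_mul_map_c_eq_one (hB : ∀ w ∈ Bset g 1 g, φ w = 1) (hc : φ (c g g) = 1)
    {k : ℕ} (hk : 1 ≤ k) (hkg : 2 * k ≤ g) :
    φ (prodb g (k + 1) (g - k)) * φ (c g (g - k)) = 1 :=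
  (mul_mul_mul_eq_one_iff (map_a_mul_map_a_eq_one φ hB hc hk (by omega))).mp
    (map_Beven_eq_one φ hB hk hkg)

lemma map_c_half_eq_one (hB : ∀ w ∈ Bset g 1 g, φ w = 1) (hc : φ (c g g) = 1) {r : ℕ}
    (hg : g = 2 * r) : φ (c g r) = 1 := by
  obtain rfl | hr := Nat.eq_zero_or_pos r
  · simp [c_zero]
  have hmiddle := map_prodb_mul_map_c_eq_one φ hB hc hr (by omega)
  rwa [show g - r = r by omega, prodb_succ_self, map_one, one_mul] at hmiddle

lemma map_b_mul_c_inv_mul_b_mul_c_eq_one (hB : ∀ w ∈ Bset g 1 g, φ w = 1) (hc : φ (c g g) = 1)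
    {k : ℕ} (hk : 1 ≤ k) (hkg : 2 * k ≤ g) :
    φ (b g k * (c g (g - k))⁻¹ * b g (g + 1 - k) * c g (g + 1 - k)) = 1 := by
  have hodd := map_Bodd_eq_one φ hB hk (by omega)
  have haa := map_a_mul_map_a_eq_one φ hB hc hk (by omega)
  have hmiddle := map_prodb_mul_map_c_eq_one φ hB hc hk hkg
  set j := g - k with hj
  rw [show g + 1 - k = j + 1 by omega] at hodd haa ⊢
  rw [prodb_succ_right g (by omega), prodb_eq_b_mul_prodb_succ g (by omega), c_succ] at hodd
  rw [c_succ]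
  simp only [map_mul, map_inv] at hodd ⊢
  rw [eq_inv_of_mul_eq_one_right haa, eq_inv_of_mul_eq_one_right hmiddle] at hodd ⊢
  rw [← conj_eq_one_iff (a := φ (a g k))]
  group at hodd ⊢
  exact hodd

end Relations

theorem G1_cr_and_bk_relations_general (r g : ℕ) (hg : g = 2 * r) :
    projBy g (Bset g 1 g) (toPi g (c g r)) = 1 ∧
      ∀ k, 1 ≤ k → k ≤ r →
        projBy g (Bset g 1 g)
          (toPi g (b g k * (c g (g - k))⁻¹ * b g (g + 1 - k) * c g (g + 1 - k))) = 1 := by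
  set φ := (projBy g (Bset g 1 g)).comp (toPi g)
  have hB : ∀ w ∈ Bset g 1 g, φ w = 1 := fun w hw =>
    (QuotientGroup.eq_one_iff _).mpr (Subgroup.subset_normalClosure (Set.mem_image_of_mem _ hw))
  have hc : φ (c g g) = 1 := by
    simp [φ, PresentedGroup.one_of_mem (Set.mem_singleton (c g g))]
  exact ⟨map_c_half_eq_one φ hB hc hg,
    fun k hk hkr => map_b_mul_c_inv_mul_b_mul_c_eq_one φ hB hc hk (by omega)⟩

/-- For `g = 2r` with `r ≥ 2`, in `G_1 = π_g / N(ℬ^g_1)` the image of `c_r`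
is trivial, and the image of the word `b_k c_{g-k}⁻¹ b_{g+1-k} c_{g+1-k}` is trivial for every
`1 ≤ k ≤ r`. -/
theorem G1_cr_and_bk_relations (r g : ℕ) (hr : 2 ≤ r) (hg : g = 2 * r) :
    projBy g (Bset g 1 g) (toPi g (c g r)) = 1 ∧
      ∀ k, 1 ≤ k → k ≤ r →
        projBy g (Bset g 1 g)
          (toPi g (b g k * (c g (g - k))⁻¹ * b g (g + 1 - k) * c g (g + 1 - k))) = 1 :=
  G1_cr_and_bk_relations_general r g hg

end Paper
end

section
/- Let g = 2r + 1 with r ≥ 2. The group G_1 = π_g / N(ℬ^g_1) is isomorphic to the genus-r surface group π_r. -/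
namespace Paper

/-!
Write `P_n = b_1 ⋯ b_n` (`prodb g 1 n`) and `X_n = x_1 ⋯ x_n` (`conjBProd g n`) with
`x_i = a_i b_i a_i⁻¹` (`conjB g i`). Then `c_n = P_n⁻¹ X_n`,
`B^g_{2k-1} = a_k P_{k-1}⁻¹ X_{g+1-k} a_{g+1-k}` and `B^g_{2k} = a_k P_k⁻¹ X_{g-k} a_{g+1-k}`.
For `g = 2r + 1`, a descending induction on `k` shows that these relators force
`X_{2r+2-k} = P_{k-1}`, `a_{2r+2-k} = a_k⁻¹` and `b_{2r+2-k} = x_k⁻¹`, while `a_{r+1}`, `c_r a_{r+1}`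
give `a_{r+1} = b_{r+1} = c_r = 1`. So `G_1` is generated by the images of `a_1, b_1, …, a_r, b_r`,
which satisfy `c_r = 1`. Conversely, folding the upper half of the generators onto these values
defines `F_g → π_r` killing `c_g` and all of `ℬ^g_1`, since the images of `P_{2r+1-j}` and
`X_{2r+1-j}` are `P_r X_r⁻¹ X_j` and `X_r P_r⁻¹ P_j`.
-/

section Words

variable {g : ℕ}

lemma a_eq_of {i : ℕ} (h₁ : 1 ≤ i) (h₂ : i ≤ g) :
    a g i = FreeGroup.of (⟨i - 1, by omega⟩, false) :=
  dif_pos ⟨h₁, h₂⟩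

lemma b_eq_of {i : ℕ} (h₁ : 1 ≤ i) (h₂ : i ≤ g) :
    b g i = FreeGroup.of (⟨i - 1, by omega⟩, true) :=
  dif_pos ⟨h₁, h₂⟩

lemma a_eq_one {i : ℕ} (h : ¬(1 ≤ i ∧ i ≤ g)) : a g i = 1 := dif_neg h

lemma b_eq_one {i : ℕ} (h : ¬(1 ≤ i ∧ i ≤ g)) : b g i = 1 := dif_neg h

lemma of_false_eq_a (i : Fin g) : FreeGroup.of (i, false) = a g (i + 1) := by
  rw [a_eq_of (by omega) i.isLt]
  simp

lemma of_true_eq_b (i : Fin g) : FreeGroup.of (i, true) = b g (i + 1) := by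
  rw [b_eq_of (by omega) i.isLt]
  simp

def conjB (g i : ℕ) : F g := a g i * b g i * (a g i)⁻¹

def conjBProd (g n : ℕ) : F g := ((List.range n).map fun j => conjB g (j + 1)).prod

@[simp] lemma conjBProd_zero : conjBProd g 0 = 1 := rfl

lemma conjBProd_succ (n : ℕ) : conjBProd g (n + 1) = conjBProd g n * conjB g (n + 1) := by
  simp [conjBProd, List.range_succ]

@[simp] lemma prodb_one_zero : prodb g 1 0 = 1 := rfl

lemma prodb_one_succ (n : ℕ) : prodb g 1 (n + 1) = prodb g 1 n * b g (n + 1) := by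
  simp [prodb, List.range_succ, add_comm]

lemma prodb_one_mul_prodb {k n : ℕ} (h : k ≤ n) :
    prodb g 1 k * prodb g (k + 1) n = prodb g 1 n := by
  obtain ⟨m, rfl⟩ := Nat.exists_eq_add_of_le h
  simp only [prodb, show k + m + 1 - 1 = k + m by omega, show k + 1 - 1 = k by omega,
    show k + m + 1 - (k + 1) = m by omega, List.range_add, List.map_append, List.prod_append,
    List.map_map]
  congr 3
  ext l
  simp only [Function.comp_apply]
  congr 1
  omega

lemma c_eq (n : ℕ) : c g n = (prodb g 1 n)⁻¹ * conjBProd g n := by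
  simp only [c, prodb, conjBProd, conjB, List.prod_inv_reverse, List.map_map, List.map_reverse,
    Nat.add_sub_cancel]
  congr 3
  ext j
  simp [add_comm]

lemma prodb_mul_c {k n : ℕ} (h : k ≤ n) :
    prodb g (k + 1) n * c g n = (prodb g 1 k)⁻¹ * conjBProd g n := by
  rw [c_eq, ← prodb_one_mul_prodb h]
  group

lemma Bodd_succ_eq {h k : ℕ} (hk : 2 * k ≤ h) :
    Bodd g h (k + 1) = a g (k + 1) * (prodb g 1 k)⁻¹ * conjBProd g (h - k) * a g (h - k) := by
  rw [Bodd, show h + 1 - (k + 1) = h - k by omega, mul_assoc (a g _), prodb_mul_c (by omega),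
    ← mul_assoc]

lemma Beven_eq {h k : ℕ} (hk : 2 * k ≤ h) :
    Beven g h k = a g k * (prodb g 1 k)⁻¹ * conjBProd g (h - k) * a g (h + 1 - k) := by
  rw [Beven, mul_assoc (a g _), prodb_mul_c (by omega), ← mul_assoc]

lemma forall_mem_Bset_odd_iff {s r : ℕ} {p : F g → Prop} :
    (∀ w ∈ Bset g s (2 * r + 1), p w) ↔
      p (B0 g s (2 * r + 1)) ∧ (∀ k ≤ r, p (Bodd g (2 * r + 1) (k + 1))) ∧
        (∀ k, 1 ≤ k → k ≤ r → p (Beven g (2 * r + 1) k)) ∧ p (a g (r + 1)) ∧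
          p (c g r * a g (r + 1)) := by
  have hBset : Bset g s (2 * r + 1) = {B0 g s (2 * r + 1)}
      ∪ {w | ∃ k, 1 ≤ k ∧ 2 * k - 1 ≤ 2 * r + 1 ∧ w = Bodd g (2 * r + 1) k}
      ∪ {w | ∃ k, 1 ≤ k ∧ 2 * k ≤ 2 * r + 1 ∧ w = Beven g (2 * r + 1) k}
      ∪ {a g (r + 1), c g r * a g (r + 1)} := by
    rw [Bset, if_pos (by omega), show (2 * r + 1) / 2 = r by omega]
  rw [hBset]
  constructor
  · intro h
    refine ⟨h _ (by simp), fun k hk => h _ ?_, fun k hk₁ hk₂ => h _ ?_, h _ (by simp),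
      h _ (by simp)⟩
    · exact Or.inl (Or.inl (Or.inr ⟨k + 1, by omega, by omega, rfl⟩))
    · exact Or.inl (Or.inr ⟨k, hk₁, by omega, rfl⟩)
  · rintro ⟨h0, hodd, heven, hmid, hcmid⟩ w
      (((rfl | ⟨k, hk₁, hk₂, rfl⟩) | ⟨k, hk₁, hk₂, rfl⟩) | rfl | rfl)
    · exact h0
    · obtain ⟨k, rfl⟩ := Nat.exists_eq_add_of_le' hk₁
      exact hodd k (by omega)
    · exact heven k hk₁ (by omega)
    · exact hmid
    · exact hcmid

end Words

section MapWords

variable {g g' : ℕ} (f : F g →* F g') {n : ℕ}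

lemma map_prodb_one (hb : ∀ i ≤ n, f (b g i) = b g' i) : f (prodb g 1 n) = prodb g' 1 n := by
  induction n with
  | zero => simp
  | succ n ih =>
    rw [prodb_one_succ, prodb_one_succ, map_mul, ih fun i hi => hb i (by omega), hb _ le_rfl]

lemma map_conjBProd (ha : ∀ i ≤ n, f (a g i) = a g' i) (hb : ∀ i ≤ n, f (b g i) = b g' i) :
    f (conjBProd g n) = conjBProd g' n := by
  induction n with
  | zero => simp
  | succ n ih =>
    rw [conjBProd_succ, conjBProd_succ, map_mul,
      ih (fun i hi => ha i (by omega)) (fun i hi => hb i (by omega)), conjB, conjB]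
    simp only [map_mul, map_inv, ha _ le_rfl, hb _ le_rfl]

lemma map_c (ha : ∀ i ≤ n, f (a g i) = a g' i) (hb : ∀ i ≤ n, f (b g i) = b g' i) :
    f (c g n) = c g' n := by
  rw [c_eq, c_eq, map_mul, map_inv, map_prodb_one f hb, map_conjBProd f ha hb]

end MapWords

section Fold

variable (r : ℕ)

-- At the middle index `i = r + 1` both second branches are `1`, as `a r (r + 1) = b r (r + 1) = 1`.
def foldA (i : ℕ) : F r := if i ≤ r then a r i else (a r (2 * r + 2 - i))⁻¹

def foldB (i : ℕ) : F r := if i ≤ r then b r i else (conjB r (2 * r + 2 - i))⁻¹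

def fold : F (2 * r + 1) →* F r :=
  FreeGroup.lift fun p => if p.2 then foldB r (p.1 + 1) else foldA r (p.1 + 1)

variable {r}

lemma fold_a (i : ℕ) : fold r (a (2 * r + 1) i) = foldA r i := by
  by_cases hi : 1 ≤ i ∧ i ≤ 2 * r + 1
  · rw [a_eq_of hi.1 hi.2, fold, FreeGroup.lift_apply_of]
    simp only [Bool.false_eq_true, if_false]
    congr 1
    omega
  · rw [a_eq_one hi, map_one, foldA]
    split_ifs
    · rw [a_eq_one (by omega)]
    · rw [a_eq_one (by omega), inv_one]

lemma fold_b (i : ℕ) : fold r (b (2 * r + 1) i) = foldB r i := by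
  by_cases hi : 1 ≤ i ∧ i ≤ 2 * r + 1
  · rw [b_eq_of hi.1 hi.2, fold, FreeGroup.lift_apply_of]
    simp only [if_true]
    congr 1
    omega
  · rw [b_eq_one hi, map_one, foldB]
    split_ifs
    · rw [b_eq_one (by omega)]
    · rw [conjB, a_eq_one (by omega), b_eq_one (by omega)]
      simp

lemma fold_a_of_le {i : ℕ} (hi : i ≤ r + 1) : fold r (a (2 * r + 1) i) = a r i := by
  rw [fold_a, foldA]
  split_ifs
  · rfl
  · rw [show i = r + 1 by omega, show 2 * r + 2 - (r + 1) = r + 1 by omega,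
      a_eq_one (by omega), inv_one]

lemma fold_b_of_le {i : ℕ} (hi : i ≤ r + 1) : fold r (b (2 * r + 1) i) = b r i := by
  rw [fold_b, foldB]
  split_ifs
  · rfl
  · rw [show i = r + 1 by omega, show 2 * r + 2 - (r + 1) = r + 1 by omega, conjB,
      a_eq_one (by omega), b_eq_one (by omega)]
    simp

lemma fold_a_mirror {k : ℕ} (hk : k ≤ r + 1) :
    fold r (a (2 * r + 1) (2 * r + 2 - k)) = (a r k)⁻¹ := by
  rw [fold_a, foldA, if_neg (by omega), show 2 * r + 2 - (2 * r + 2 - k) = k by omega]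

lemma fold_b_mirror {k : ℕ} (hk : k ≤ r + 1) :
    fold r (b (2 * r + 1) (2 * r + 2 - k)) = (conjB r k)⁻¹ := by
  rw [fold_b, foldB, if_neg (by omega), show 2 * r + 2 - (2 * r + 2 - k) = k by omega]

lemma fold_conjB_mirror {k : ℕ} (hk : k ≤ r + 1) :
    fold r (conjB (2 * r + 1) (2 * r + 2 - k)) = (b r k)⁻¹ := by
  simp only [conjB, map_mul, map_inv, fold_a_mirror hk, fold_b_mirror hk]
  group

lemma fold_prodb_one {n : ℕ} (hn : n ≤ r) : fold r (prodb (2 * r + 1) 1 n) = prodb r 1 n :=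
  map_prodb_one _ fun _ hi => fold_b_of_le (by omega)

lemma fold_conjBProd {n : ℕ} (hn : n ≤ r) : fold r (conjBProd (2 * r + 1) n) = conjBProd r n :=
  map_conjBProd _ (fun _ hi => fold_a_of_le (by omega)) fun _ hi => fold_b_of_le (by omega)

lemma fold_c {n : ℕ} (hn : n ≤ r) : fold r (c (2 * r + 1) n) = c r n :=
  map_c _ (fun _ hi => fold_a_of_le (by omega)) fun _ hi => fold_b_of_le (by omega)

lemma fold_prodb_one_mirror {j : ℕ} (hj : j ≤ r) :
    fold r (prodb (2 * r + 1) 1 (2 * r + 1 - j)) =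
      prodb r 1 r * (conjBProd r r)⁻¹ * conjBProd r j := by
  induction hj using Nat.decreasingInduction with
  | self =>
    rw [show 2 * r + 1 - r = r + 1 by omega, prodb_one_succ, map_mul, fold_prodb_one le_rfl,
      fold_b_of_le le_rfl, b_eq_one (by omega)]
    group
  | of_succ j hj ih =>
    rw [show 2 * r + 1 - j = (2 * r + 1 - (j + 1)) + 1 by omega, prodb_one_succ, map_mul, ih,
      show 2 * r + 1 - (j + 1) + 1 = 2 * r + 2 - (j + 1) by omega, fold_b_mirror (by omega),
      conjBProd_succ]
    group

lemma fold_conjBProd_mirror {j : ℕ} (hj : j ≤ r) :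
    fold r (conjBProd (2 * r + 1) (2 * r + 1 - j)) =
      conjBProd r r * (prodb r 1 r)⁻¹ * prodb r 1 j := by
  induction hj using Nat.decreasingInduction with
  | self =>
    have hmid : fold r (conjB (2 * r + 1) (r + 1)) = 1 := by
      rw [show r + 1 = 2 * r + 2 - (r + 1) by omega, fold_conjB_mirror le_rfl,
        b_eq_one (by omega), inv_one]
    rw [show 2 * r + 1 - r = r + 1 by omega, conjBProd_succ, map_mul, fold_conjBProd le_rfl, hmid]
    group
  | of_succ j hj ih =>
    rw [show 2 * r + 1 - j = (2 * r + 1 - (j + 1)) + 1 by omega, conjBProd_succ, map_mul, ih,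
      show 2 * r + 1 - (j + 1) + 1 = 2 * r + 2 - (j + 1) by omega, fold_conjB_mirror (by omega),
      prodb_one_succ]
    group

end Fold

section Lift

variable {g : ℕ} {G : Type*} [Group G]

def liftPi (φ : F g →* G) (h : φ (c g g) = 1) : pi g →* G :=
  PresentedGroup.toGroup (f := φ ∘ FreeGroup.of) (by
    rintro _ rfl
    exact (FreeGroup.lift_unique φ fun _ => rfl).symm.trans h)

@[simp] lemma liftPi_toPi (φ : F g →* G) (h : φ (c g g) = 1) (w : F g) :
    liftPi φ h (toPi g w) = φ w :=
  (FreeGroup.lift_unique φ fun _ => rfl).symm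

lemma toPi_c_self : toPi g (c g g) = 1 :=
  PresentedGroup.one_of_mem rfl

lemma toPi_prodb_one_self : toPi g (prodb g 1 g) = toPi g (conjBProd g g) := by
  have h : prodb g 1 g * c g g = conjBProd g g := by rw [c_eq, mul_inv_cancel_left]
  rw [← h, map_mul, toPi_c_self, mul_one]

end Lift

section OddGenus

variable {r : ℕ}

lemma toPi_fold_c : toPi r (fold r (c (2 * r + 1) (2 * r + 1))) = 1 := by
  have hP := fold_prodb_one_mirror (r := r) (Nat.zero_le r)
  have hX := fold_conjBProd_mirror (r := r) (Nat.zero_le r)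
  rw [Nat.sub_zero] at hP hX
  rw [c_eq (g := 2 * r + 1), map_mul, map_inv, hP, hX]
  simp only [map_mul, map_inv, toPi_prodb_one_self, prodb_one_zero, conjBProd_zero]
  group

lemma toPi_fold_eq_one : ∀ w ∈ Bset (2 * r + 1) 1 (2 * r + 1), toPi r (fold r w) = 1 := by
  refine forall_mem_Bset_odd_iff.2 ⟨?_, fun k hk => ?_, fun k hk₁ hk₂ => ?_, ?_, ?_⟩
  · have hP := fold_prodb_one_mirror (r := r) (Nat.zero_le r)
    rw [Nat.sub_zero] at hP
    rw [B0, if_pos rfl, B01, hP]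
    simp only [map_mul, map_inv, toPi_prodb_one_self, conjBProd_zero, map_one]
    group
  · rw [Bodd_succ_eq (by omega), show 2 * r + 1 - k = 2 * r + 2 - (k + 1) by omega]
    simp only [map_mul, map_inv]
    rw [fold_a_of_le (by omega), fold_prodb_one hk, fold_a_mirror (by omega),
      show 2 * r + 2 - (k + 1) = 2 * r + 1 - k by omega, fold_conjBProd_mirror hk]
    simp only [map_mul, map_inv, toPi_prodb_one_self]
    group
  · rw [Beven_eq (by omega), show 2 * r + 1 + 1 - k = 2 * r + 2 - k by omega]
    simp only [map_mul, map_inv]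
    rw [fold_a_of_le (by omega), fold_prodb_one hk₂, fold_a_mirror (by omega),
      fold_conjBProd_mirror hk₂]
    simp only [map_mul, map_inv, toPi_prodb_one_self]
    group
  · rw [fold_a_of_le le_rfl, a_eq_one (by omega), map_one]
  · rw [map_mul, fold_c le_rfl, fold_a_of_le le_rfl, a_eq_one (by omega), mul_one, toPi_c_self]

section Relations

variable {s : ℕ} {G : Type*} [Group G] {f : F (2 * r + 1) →* G}
  (hf : ∀ w ∈ Bset (2 * r + 1) s (2 * r + 1), f w = 1)
include hf

lemma map_a_middle : f (a _ (r + 1)) = 1 :=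
  (forall_mem_Bset_odd_iff.1 hf).2.2.2.1

lemma map_c_middle : f (c _ r) = 1 := by
  simpa [map_a_middle hf] using (forall_mem_Bset_odd_iff.1 hf).2.2.2.2

lemma map_prodb_one_middle : f (prodb _ 1 r) = f (conjBProd _ r) := by
  have h := map_c_middle hf
  rwa [c_eq, map_mul, map_inv, inv_mul_eq_one] at h

lemma map_a_mirror_of {k : ℕ} (hk₁ : 1 ≤ k) (hk₂ : k ≤ r)
    (hX : f (conjBProd _ (2 * r + 1 - k)) = f (prodb _ 1 k)) :
    f (a _ (2 * r + 2 - k)) = (f (a _ k))⁻¹ := by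
  have h := (forall_mem_Bset_odd_iff.1 hf).2.2.1 k hk₁ hk₂
  rw [Beven_eq (by omega), show 2 * r + 1 + 1 - k = 2 * r + 2 - k by omega] at h
  simp only [map_mul, map_inv, hX, inv_mul_cancel_right] at h
  exact eq_inv_of_mul_eq_one_right h

lemma map_conjBProd_mirror {j : ℕ} (hj : j ≤ r) :
    f (conjBProd _ (2 * r + 1 - j)) = f (prodb _ 1 j) := by
  induction hj using Nat.decreasingInduction with
  | self =>
    have hodd := (forall_mem_Bset_odd_iff.1 hf).2.1 r le_rfl
    rw [Bodd_succ_eq (by omega)] at hodd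
    rw [show 2 * r + 1 - r = r + 1 by omega] at hodd ⊢
    simp only [map_mul, map_inv, map_a_middle hf, one_mul, mul_one, inv_mul_eq_one] at hodd
    exact hodd.symm
  | of_succ j hj ih =>
    have hodd := (forall_mem_Bset_odd_iff.1 hf).2.1 j hj.le
    have ha := map_a_mirror_of hf (k := j + 1) (by omega) (by omega) ih
    rw [show 2 * r + 2 - (j + 1) = 2 * r + 1 - j by omega] at ha
    rw [Bodd_succ_eq (by omega), map_mul, ha, mul_inv_eq_one, map_mul, map_mul, mul_assoc,
      mul_eq_left, map_inv, inv_mul_eq_one] at hodd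
    exact hodd.symm

lemma map_a_mirror {k : ℕ} (hk₁ : 1 ≤ k) (hk₂ : k ≤ r) :
    f (a _ (2 * r + 2 - k)) = (f (a _ k))⁻¹ :=
  map_a_mirror_of hf hk₁ hk₂ (map_conjBProd_mirror hf hk₂)

lemma map_conjB_mirror {k : ℕ} (hk₁ : 1 ≤ k) (hk₂ : k ≤ r) :
    f (conjB _ (2 * r + 2 - k)) = (f (b _ k))⁻¹ := by
  obtain ⟨j, rfl⟩ : ∃ j, k = j + 1 := ⟨k - 1, by omega⟩
  have hX := map_conjBProd_mirror hf (j := j) (by omega)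
  rw [show 2 * r + 1 - j = 2 * r + 1 - (j + 1) + 1 by omega, conjBProd_succ, map_mul,
    map_conjBProd_mirror hf hk₂, prodb_one_succ, map_mul, mul_assoc, mul_eq_left,
    mul_eq_one_iff_inv_eq, show 2 * r + 1 - (j + 1) + 1 = 2 * r + 2 - (j + 1) by omega] at hX
  exact hX.symm

lemma map_b_mirror {k : ℕ} (hk₁ : 1 ≤ k) (hk₂ : k ≤ r) :
    f (b _ (2 * r + 2 - k)) = (f (conjB _ k))⁻¹ := by
  have hx := map_conjB_mirror hf hk₁ hk₂
  simp only [conjB, map_mul, map_inv, map_a_mirror hf hk₁ hk₂] at hx ⊢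
  calc f (b _ (2 * r + 2 - k))
      = f (a _ k) * ((f (a _ k))⁻¹ * f (b _ (2 * r + 2 - k)) * (f (a _ k))⁻¹⁻¹) *
          (f (a _ k))⁻¹ := by
        group
    _ = (f (a _ k) * f (b _ k) * (f (a _ k))⁻¹)⁻¹ := by
        rw [hx]
        group

lemma map_b_middle : f (b _ (r + 1)) = 1 := by
  have hX := map_conjBProd_mirror hf (le_refl r)
  rw [show 2 * r + 1 - r = r + 1 by omega, conjBProd_succ, map_mul, ← map_prodb_one_middle hf,
    mul_eq_left, conjB] at hX
  simpa [map_a_middle hf] using hX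

end Relations

section Inclusion

variable (r) in
def incl : F r →* F (2 * r + 1) := FreeGroup.map fun p => (Fin.castLE (by omega) p.1, p.2)

lemma incl_a {i : ℕ} (hi : i ≤ r) : incl r (a r i) = a (2 * r + 1) i := by
  by_cases h₀ : i = 0
  · rw [h₀, a_eq_one (by omega), a_eq_one (by omega), map_one]
  · rw [a_eq_of (by omega) hi, a_eq_of (by omega) (by omega), incl, FreeGroup.map.of]
    rfl

lemma incl_b {i : ℕ} (hi : i ≤ r) : incl r (b r i) = b (2 * r + 1) i := by
  by_cases h₀ : i = 0
  · rw [h₀, b_eq_one (by omega), b_eq_one (by omega), map_one]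
  · rw [b_eq_of (by omega) hi, b_eq_of (by omega) (by omega), incl, FreeGroup.map.of]
    rfl

lemma incl_conjB {i : ℕ} (hi : i ≤ r) : incl r (conjB r i) = conjB (2 * r + 1) i := by
  simp only [conjB, map_mul, map_inv, incl_a hi, incl_b hi]

lemma fold_comp_incl : (fold r).comp (incl r) = MonoidHom.id (F r) := by
  refine FreeGroup.ext_hom _ _ fun ⟨i, s⟩ => ?_
  have hi : (i : ℕ) + 1 ≤ r := i.isLt
  cases s
  · rw [MonoidHom.comp_apply, of_false_eq_a, incl_a hi, fold_a_of_le (by omega)]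
    rfl
  · rw [MonoidHom.comp_apply, of_true_eq_b, incl_b hi, fold_b_of_le (by omega)]
    rfl

end Inclusion

variable (r) in
abbrev G₁ := quotBy (2 * r + 1) (Bset (2 * r + 1) 1 (2 * r + 1))

variable (r) in
def projG₁ : F (2 * r + 1) →* G₁ r := (projBy _ _).comp (toPi _)

lemma projG₁_eq_one : ∀ w ∈ Bset (2 * r + 1) 1 (2 * r + 1), projG₁ r w = 1 := fun w hw =>
  (QuotientGroup.eq_one_iff _).2 (Subgroup.subset_normalClosure ⟨w, hw, rfl⟩)

lemma projG₁_incl_fold_a {i : ℕ} (hi : i ≤ 2 * r + 1) :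
    projG₁ r (incl r (fold r (a _ i))) = projG₁ r (a _ i) := by
  obtain hi' | rfl | hi' : i ≤ r ∨ i = r + 1 ∨ r + 2 ≤ i := by omega
  · rw [fold_a_of_le (by omega), incl_a hi']
  · rw [fold_a_of_le le_rfl, a_eq_one (g := r) (by omega), map_one, map_one,
      map_a_middle projG₁_eq_one]
  · obtain ⟨k, hk₁, hk₂, rfl⟩ : ∃ k, 1 ≤ k ∧ k ≤ r ∧ i = 2 * r + 2 - k :=
      ⟨2 * r + 2 - i, by omega, by omega, by omega⟩
    rw [fold_a_mirror (by omega), map_inv, incl_a hk₂, map_inv,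
      map_a_mirror projG₁_eq_one hk₁ hk₂]

lemma projG₁_incl_fold_b {i : ℕ} (hi : i ≤ 2 * r + 1) :
    projG₁ r (incl r (fold r (b _ i))) = projG₁ r (b _ i) := by
  obtain hi' | rfl | hi' : i ≤ r ∨ i = r + 1 ∨ r + 2 ≤ i := by omega
  · rw [fold_b_of_le (by omega), incl_b hi']
  · rw [fold_b_of_le le_rfl, b_eq_one (g := r) (by omega), map_one, map_one,
      map_b_middle projG₁_eq_one]
  · obtain ⟨k, hk₁, hk₂, rfl⟩ : ∃ k, 1 ≤ k ∧ k ≤ r ∧ i = 2 * r + 2 - k :=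
      ⟨2 * r + 2 - i, by omega, by omega, by omega⟩
    rw [fold_b_mirror (by omega), map_inv, incl_conjB hk₂, map_inv,
      map_b_mirror projG₁_eq_one hk₁ hk₂]

lemma projG₁_comp_incl_comp_fold : ((projG₁ r).comp (incl r)).comp (fold r) = projG₁ r := by
  refine FreeGroup.ext_hom _ _ fun ⟨i, s⟩ => ?_
  cases s
  · rw [of_false_eq_a]
    exact projG₁_incl_fold_a i.isLt
  · rw [of_true_eq_b]
    exact projG₁_incl_fold_b i.isLt

variable (r) in
def foldG₁ : G₁ r →* pi r :=
  QuotientGroup.lift _ (liftPi ((toPi r).comp (fold r)) toPi_fold_c) <|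
    Subgroup.normalClosure_le_normal <| by
      rintro _ ⟨w, hw, rfl⟩
      simpa using toPi_fold_eq_one w hw

variable (r) in
def inclG₁ : pi r →* G₁ r :=
  liftPi ((projG₁ r).comp (incl r)) <| by
    rw [MonoidHom.comp_apply, map_c _ (fun _ => incl_a) (fun _ => incl_b)]
    exact map_c_middle projG₁_eq_one

lemma foldG₁_projG₁ (w : F (2 * r + 1)) : foldG₁ r (projG₁ r w) = toPi r (fold r w) :=
  liftPi_toPi _ toPi_fold_c w

lemma inclG₁_toPi (w : F r) : inclG₁ r (toPi r w) = projG₁ r (incl r w) :=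
  liftPi_toPi _ _ w

lemma foldG₁_comp_inclG₁ : (foldG₁ r).comp (inclG₁ r) = MonoidHom.id (pi r) := by
  refine PresentedGroup.ext fun x => ?_
  change foldG₁ r (inclG₁ r (toPi r (.of x))) = toPi r (.of x)
  rw [inclG₁_toPi, foldG₁_projG₁, ← MonoidHom.comp_apply (fold r), fold_comp_incl,
    MonoidHom.id_apply]

lemma inclG₁_comp_foldG₁ : (inclG₁ r).comp (foldG₁ r) = MonoidHom.id (G₁ r) := by
  refine QuotientGroup.monoidHom_ext _ (PresentedGroup.ext fun x => ?_)
  change inclG₁ r (foldG₁ r (projG₁ r (.of x))) = projG₁ r (.of x)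
  rw [foldG₁_projG₁, inclG₁_toPi]
  exact DFunLike.congr_fun projG₁_comp_incl_comp_fold _

end OddGenus

theorem G1_iso_genus_r_odd_general (r g : ℕ) (hg : g = 2 * r + 1) :
    Nonempty (quotBy g (Bset g 1 g) ≃* pi r) := by
  subst hg
  exact ⟨(foldG₁ r).toMulEquiv (inclG₁ r) inclG₁_comp_foldG₁ foldG₁_comp_inclG₁⟩

/-- For `g = 2r + 1` with `r ≥ 2`, the group `G_1 = π_g / N(ℬ^g_1)` is
isomorphic to the genus-`r` surface group `π_r`. -/
theorem G1_iso_genus_r_odd (r g : ℕ) (hr : 2 ≤ r) (hg : g = 2 * r + 1) :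
    Nonempty (quotBy g (Bset g 1 g) ≃* pi r) :=
  G1_iso_genus_r_odd_general r g hg
end Paper
end
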